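/- Every subdirect embedding A → ∏_{i=1}^n A_i can be refined to a subdirect product-essential embedding: there exist congruences φ̄_i on A_i such that the induced map A → ∏_{i=1}^n A_i/φ̄_i is a subdirect product-essential embedding. -/

import Mathlib

/-- An algebraic signature: a type of operation symbols with finite arities. -/
structure Signature where
  ops : Type
  arity : ops → ℕ

/-- An algebra for a signature. -/
structure SAlgebra (S : Signature) where
  carrier : Type
  interp : (o : S.ops) → (Fin (S.arity o) → carrier) → carrier

namespace SAlgebra

variable {S : Signature}

/-- Binary product of algebras. -/
def prod (A B : SAlgebra S) : SAlgebra S where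
  carrier := A.carrier × B.carrier
  interp o x := (A.interp o fun i => (x i).1, B.interp o fun i => (x i).2)

/-- Product of a family of algebras. -/
def pi {ι : Type} (A : ι → SAlgebra S) : SAlgebra S where
  carrier := ∀ i, (A i).carrier
  interp o x i := (A i).interp o fun j => x j i

end SAlgebra

/-- Homomorphisms of algebras. -/
structure SHom {S : Signature} (A B : SAlgebra S) where
  toFun : A.carrier → B.carrier
  map : ∀ (o : S.ops) (x : Fin (S.arity o) → A.carrier),
    toFun (A.interp o x) = B.interp o fun i => toFun (x i)

namespace SHom

variable {S : Signature}

/-- Composition of homomorphisms. -/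
def comp {A B C : SAlgebra S} (g : SHom B C) (f : SHom A B) : SHom A C where
  toFun := g.toFun ∘ f.toFun
  map o x := by simp [Function.comp, f.map, g.map]

/-- The `i`-th projection of a product. -/
def proj {ι : Type} (A : ι → SAlgebra S) (i : ι) : SHom (SAlgebra.pi A) (A i) where
  toFun x := x i
  map _ _ := rfl

end SHom

/-- Congruences of an algebra. -/
structure SCon {S : Signature} (A : SAlgebra S) where
  r : A.carrier → A.carrier → Prop
  iseqv : Equivalence r
  compat : ∀ (o : S.ops) (x y : Fin (S.arity o) → A.carrier),
    (∀ i, r (x i) (y i)) → r (A.interp o x) (A.interp o y)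

namespace SCon

variable {S : Signature} {A : SAlgebra S}

instance : PartialOrder (SCon A) where
  le c d := ∀ x y, c.r x y → d.r x y
  le_refl _ _ _ h := h
  le_trans _ _ _ h h' x y hx := h' x y (h x y hx)
  le_antisymm a b h h' := by
    cases a; cases b
    have : ∀ x y : A.carrier, _ ↔ _ := fun x y => Iff.intro (h x y) (h' x y)
    simp only [SCon.mk.injEq]
    funext x y
    exact propext (this x y)

instance : InfSet (SCon A) :=
  ⟨fun s =>
    { r := fun x y => ∀ c ∈ s, c.r x y
      iseqv := ⟨fun x c _ => c.iseqv.refl x, fun h c hc => c.iseqv.symm (h c hc),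
        fun h1 h2 c hc => c.iseqv.trans (h1 c hc) (h2 c hc)⟩
      compat := fun o x y h c hc => c.compat o x y fun i => h i c hc }⟩

instance : CompleteLattice (SCon A) :=
  completeLatticeOfInf _ (fun s =>
    ⟨fun c hc x y h => h c hc, fun b hb x y h c hc => hb hc x y h⟩)

/-- Restriction (inverse image) of a congruence along a homomorphism. -/
def comap {B : SAlgebra S} (f : SHom A B) (θ : SCon B) : SCon A where
  r x y := θ.r (f.toFun x) (f.toFun y)
  iseqv := ⟨fun _ => θ.iseqv.refl _, θ.iseqv.symm, θ.iseqv.trans⟩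
  compat o x y h := by
    show θ.r (f.toFun (A.interp o x)) (f.toFun (A.interp o y))
    rw [f.map, f.map]
    exact θ.compat o _ _ h

/-- Product of two congruences. -/
def prodCon {A B : SAlgebra S} (φ : SCon A) (ψ : SCon B) : SCon (A.prod B) where
  r x y := φ.r x.1 y.1 ∧ ψ.r x.2 y.2
  iseqv := ⟨fun _ => ⟨φ.iseqv.refl _, ψ.iseqv.refl _⟩,
    fun h => ⟨φ.iseqv.symm h.1, ψ.iseqv.symm h.2⟩,
    fun h h' => ⟨φ.iseqv.trans h.1 h'.1, ψ.iseqv.trans h.2 h'.2⟩⟩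
  compat o x y h := ⟨φ.compat o _ _ fun i => (h i).1, ψ.compat o _ _ fun i => (h i).2⟩

/-- Product of a family of congruences. -/
def piCon {ι : Type} {A : ι → SAlgebra S} (φ : ∀ i, SCon (A i)) : SCon (SAlgebra.pi A) where
  r x y := ∀ i, (φ i).r (x i) (y i)
  iseqv := ⟨fun _ i => (φ i).iseqv.refl _, fun h i => (φ i).iseqv.symm (h i),
    fun h h' i => (φ i).iseqv.trans (h i) (h' i)⟩
  compat o x y h i := (φ i).compat o _ _ fun j => h j i

end SCon

/-- Terms in `n` variables over a signature. -/
inductive STerm (S : Signature) : ℕ → Type where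
  | var : {n : ℕ} → Fin n → STerm S n
  | app : {n : ℕ} → (o : S.ops) → (Fin (S.arity o) → STerm S n) → STerm S n

/-- Evaluation of a term in an algebra. -/
def STerm.eval {S : Signature} (A : SAlgebra S) {n : ℕ} : STerm S n → (Fin n → A.carrier) → A.carrier
  | .var i, x => x i
  | .app o t, x => A.interp o fun j => (t j).eval A x

/-- The term-condition centralizer relation `C(α, β; δ)`. -/
def Centralizes {S : Signature} (A : SAlgebra S) (α β δ : SCon A) : Prop :=
  ∀ (n m : ℕ) (t : STerm S (n + m)) (a b : Fin n → A.carrier) (u v : Fin m → A.carrier),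
    (∀ i, α.r (a i) (b i)) → (∀ j, β.r (u j) (v j)) →
    δ.r (t.eval A (Fin.append a u)) (t.eval A (Fin.append a v)) →
    δ.r (t.eval A (Fin.append b u)) (t.eval A (Fin.append b v))

/-- The commutator `[α, β]`: the least congruence `δ` with `C(α, β; δ)`. -/
def conCommutator {S : Signature} (A : SAlgebra S) (α β : SCon A) : SCon A :=
  sInf {δ | Centralizes A α β δ}

/-- The center of an algebra: the largest central congruence. -/
def conCenter {S : Signature} (A : SAlgebra S) : SCon A :=
  sSup {θ | conCommutator A θ ⊤ = ⊥}

/-- A class of algebras is a variety iff it is closed under subalgebras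
(isomorphic copies included), homomorphic images and products. -/
def IsVariety {S : Signature} (V : SAlgebra S → Prop) : Prop :=
  (∀ (A B : SAlgebra S) (e : SHom A B), Function.Injective e.toFun → V B → V A) ∧
  (∀ (A B : SAlgebra S) (p : SHom A B), Function.Surjective p.toFun → V A → V B) ∧
  (∀ (ι : Type) (A : ι → SAlgebra S), (∀ i, V (A i)) → V (SAlgebra.pi A))

/-- A congruence modular variety. -/
def IsCongruenceModularVariety {S : Signature} (V : SAlgebra S → Prop) : Prop :=
  IsVariety V ∧ ∀ A : SAlgebra S, V A → IsModularLattice (SCon A)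

/-- A Gumm difference term for the class `V`:  `d(x,y,y) = x` holds identically,
and `d(x,x,y) = y` whenever `x θ y` for an abelian congruence `θ`. -/
def IsGummDifferenceTerm {S : Signature} (V : SAlgebra S → Prop) (d : STerm S 3) : Prop :=
  (∀ A : SAlgebra S, V A → ∀ x y : A.carrier, d.eval A ![x, y, y] = x) ∧
  (∀ A : SAlgebra S, V A → ∀ θ : SCon A, conCommutator A θ θ = ⊥ →
    ∀ x y : A.carrier, θ.r x y → d.eval A ![x, x, y] = y)

/-- `R` is an absolute retract in `V`: every embedding of `R` into a member of `V`
admits a retraction. -/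
def IsAbsoluteRetract {S : Signature} (V : SAlgebra S → Prop) (R : SAlgebra S) : Prop :=
  ∀ A : SAlgebra S, V A → ∀ e : SHom R A, Function.Injective e.toFun →
    ∃ p : SHom A R, ∀ x, p.toFun (e.toFun x) = x

/-- An embedding is essential iff every congruence of the codomain restricting
trivially is trivial. -/
def IsEssential {S : Signature} {A B : SAlgebra S} (e : SHom A B) : Prop :=
  ∀ θ : SCon B, SCon.comap e θ = ⊥ → θ = ⊥

/-- A congruence `α` is dense: any congruence meeting it trivially is trivial. -/
def DenseCon {S : Signature} {A : SAlgebra S} (α : SCon A) : Prop :=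
  ∀ θ : SCon A, θ ⊓ α = ⊥ → θ = ⊥

/-- The setoid underlying a congruence. -/
def SCon.setoid {S : Signature} {A : SAlgebra S} (θ : SCon A) : Setoid A.carrier :=
  ⟨θ.r, θ.iseqv⟩

/-- Quotient algebra. -/
noncomputable def SAlgebra.quot {S : Signature} (A : SAlgebra S) (θ : SCon A) : SAlgebra S where
  carrier := Quotient θ.setoid
  interp o x := Quotient.mk θ.setoid (A.interp o fun i => (x i).out)

theorem SCon.out_rel {S : Signature} {A : SAlgebra S} (θ : SCon A) (a : A.carrier) :
    θ.r (Quotient.out (Quotient.mk θ.setoid a)) a :=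
  @Quotient.exact _ θ.setoid _ _ (Quotient.out_eq _)

/-- The canonical quotient homomorphism. -/
def SHom.quotHom {S : Signature} (A : SAlgebra S) (θ : SCon A) : SHom A (A.quot θ) where
  toFun := Quotient.mk θ.setoid
  map o x := Quotient.sound (θ.compat o _ _ fun i => θ.iseqv.symm (θ.out_rel (x i)))

/-- Product map of a family of homomorphisms. -/
def SHom.piMap {S : Signature} {ι : Type} {A B : ι → SAlgebra S} (f : ∀ i, SHom (A i) (B i)) :
    SHom (SAlgebra.pi A) (SAlgebra.pi B) where
  toFun x i := (f i).toFun (x i)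
  map o x := funext fun i => (f i).map o fun j => x j i

/-- The congruence `φ/θ` on the quotient `A/θ`, for `θ ≤ φ`. -/
def SCon.quotCon {S : Signature} {A : SAlgebra S} (θ φ : SCon A) (h : θ ≤ φ) :
    SCon (A.quot θ) where
  r a b := φ.r a.out b.out
  iseqv := ⟨fun _ => φ.iseqv.refl _, φ.iseqv.symm, φ.iseqv.trans⟩
  compat o x y hxy := by
    have hx := h _ _ (θ.out_rel (A.interp o fun i => (x i).out))
    have hy := h _ _ (θ.out_rel (A.interp o fun i => (y i).out))
    exact φ.iseqv.trans hx (φ.iseqv.trans (φ.compat o _ _ hxy) (φ.iseqv.symm hy))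

/-- Finitely subdirectly irreducible: `⊥` is meet irreducible in the congruence lattice. -/
def IsFSI {S : Signature} (A : SAlgebra S) : Prop :=
  ∀ θ φ : SCon A, θ ⊓ φ = ⊥ → θ = ⊥ ∨ φ = ⊥

/-- Subdirectly irreducible: the congruence lattice has a monolith. -/
def IsSubdirectlyIrreducible {S : Signature} (A : SAlgebra S) : Prop :=
  ∃ μ : SCon A, μ ≠ ⊥ ∧ ∀ θ : SCon A, θ ≠ ⊥ → μ ≤ θ

/-!
Among the tuples `(φᵢ)` of congruences `φᵢ` on `Aᵢ` whose product pulls back to `0` on `A`, Zorn's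
lemma gives one that is maximal for the pointwise order: a chain of such tuples is bounded by its
coordinatewise union, which still pulls back to `0` because only finitely many coordinates are
involved. By the correspondence between congruences of `Aᵢ/φᵢ` and congruences of `Aᵢ` above `φᵢ`,
maximality of `(φᵢ)` says exactly that `A → ∏ Aᵢ/φᵢ` is product-essential.
-/

namespace SCon

variable {S : Signature} {A B : SAlgebra S}

@[ext]
theorem ext {θ θ' : SCon A} (h : ∀ x y, θ.r x y ↔ θ'.r x y) : θ = θ' :=
  le_antisymm (fun x y => (h x y).1) (fun x y => (h x y).2)

theorem r_bot_iff {x y : A.carrier} : (⊥ : SCon A).r x y ↔ x = y := by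
  refine ⟨fun h => ?_, fun h => h ▸ (⊥ : SCon A).iseqv.refl x⟩
  let diagonal : SCon A := ⟨Eq, eq_equivalence, fun o _ _ h => congrArg (A.interp o) (funext h)⟩
  exact (bot_le : ⊥ ≤ diagonal) x y h

theorem comap_mono (f : SHom A B) : Monotone (comap f) :=
  fun _ _ h _ _ => h _ _

theorem comap_comp {C : SAlgebra S} (g : SHom B C) (f : SHom A B) (θ : SCon C) :
    comap (g.comp f) θ = comap f (comap g θ) :=
  rfl

theorem comap_bot_eq_bot_iff (f : SHom A B) : comap f ⊥ = ⊥ ↔ Function.Injective f.toFun := by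
  simp only [SCon.ext_iff, comap, r_bot_iff]
  exact ⟨fun h x y => (h x y).1, fun h _ _ => h.eq_iff⟩

theorem comap_injective_of_surjective {f : SHom A B} (hf : Function.Surjective f.toFun) :
    Function.Injective (comap f) := by
  intro θ θ' h
  ext p q
  obtain ⟨a, rfl⟩ := hf p
  obtain ⟨b, rfl⟩ := hf q
  exact Iff.of_eq (congrArg (fun c : SCon A => c.r a b) h)

theorem comap_quotHom_bot (θ : SCon A) : comap (SHom.quotHom A θ) ⊥ = θ :=
  ext fun _ _ => r_bot_iff.trans (Quotient.eq (r := θ.setoid))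

theorem quotHom_surjective (θ : SCon A) : Function.Surjective (SHom.quotHom A θ).toFun :=
  Quotient.mk_surjective

section Pi

variable {ι : Type} {B : ι → SAlgebra S}

theorem piCon_bot : piCon (⊥ : ∀ i, SCon (B i)) = ⊥ := by
  ext x y
  simp only [piCon, Pi.bot_apply, r_bot_iff]
  exact funext_iff.symm

theorem comap_piMap_piCon {C : ι → SAlgebra S} (f : ∀ i, SHom (B i) (C i))
    (ψ : ∀ i, SCon (C i)) :
    comap (SHom.piMap f) (piCon ψ) = piCon fun i => comap (f i) (ψ i) :=
  rfl

end Pi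

def directedSup {κ : Type*} [Nonempty κ] (θ : κ → SCon A) (hθ : Directed (· ≤ ·) θ) :
    SCon A where
  r x y := ∃ k, (θ k).r x y
  iseqv := by
    refine ⟨fun x => ⟨Classical.arbitrary κ, (θ _).iseqv.refl x⟩, ?_, ?_⟩
    · rintro x y ⟨k, h⟩
      exact ⟨k, (θ k).iseqv.symm h⟩
    · rintro x y z ⟨k, hxy⟩ ⟨l, hyz⟩
      obtain ⟨m, hkm, hlm⟩ := hθ k l
      exact ⟨m, (θ m).iseqv.trans (hkm _ _ hxy) (hlm _ _ hyz)⟩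
  compat o x y h := by
    choose k hk using h
    obtain ⟨m, hm⟩ := hθ.finite_le k
    exact ⟨m, (θ m).compat o x y fun i => hm i _ _ (hk i)⟩

theorem le_directedSup {κ : Type*} [Nonempty κ] (θ : κ → SCon A) (hθ : Directed (· ≤ ·) θ)
    (k : κ) : θ k ≤ directedSup θ hθ :=
  fun _ _ h => ⟨k, h⟩

end SCon

open SCon

theorem exists_maximal_comap_piCon_eq_bot {S : Signature} {ι : Type} [Finite ι]
    {A : SAlgebra S} {B : ι → SAlgebra S} (e : SHom A (SAlgebra.pi B))
    (hinj : Function.Injective e.toFun) :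
    ∃ φ : ∀ i, SCon (B i), Maximal (fun φ => comap e (piCon φ) = ⊥) φ := by
  have hbot : comap e (piCon ⊥) = ⊥ := by rwa [piCon_bot, comap_bot_eq_bot_iff]
  have hchain : ∀ c ⊆ {φ | comap e (piCon φ) = ⊥}, IsChain (· ≤ ·) c → ∀ φ₀ ∈ c,
      ∃ ub ∈ {φ | comap e (piCon φ) = ⊥}, ∀ φ ∈ c, φ ≤ ub := by
    intro c hcS hc φ₀ hφ₀
    have : Nonempty c := ⟨⟨φ₀, hφ₀⟩⟩
    have hdir : Directed (· ≤ ·) (fun φ : c => φ.1) := hc.directed (f := id)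
    let ub : ∀ i, SCon (B i) := fun i => directedSup (fun φ : c => φ.1 i)
      (hdir.mono_comp (· ≤ ·) (g := Function.eval i) fun _ _ h => h i)
    refine ⟨ub, eq_bot_iff.2 fun x y hxy => ?_, fun φ hφ i =>
      le_directedSup (fun φ : c => φ.1 i) _ ⟨φ, hφ⟩⟩
    choose k hk using hxy
    obtain ⟨m, hm⟩ := hdir.finite_le k
    rw [← hcS m.2]
    exact fun i => hm i i _ _ (hk i)
  obtain ⟨φ, -, hφ⟩ := zorn_le_nonempty₀ _ hchain ⊥ hbot
  exact ⟨φ, hφ⟩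

/-- Every subdirect embedding `A → ∏ Aᵢ` can be refined to a subdirect product-essential
embedding `A → ∏ Aᵢ/φᵢ`. -/
theorem subdirect_refines_to_product_essential {S : Signature}
    (n : ℕ) (A : SAlgebra S) (Ai : Fin n → SAlgebra S)
    (e : SHom A (SAlgebra.pi Ai)) (hinj : Function.Injective e.toFun)
    (hsub : ∀ i, Function.Surjective fun x => e.toFun x i) :
    ∃ φ : ∀ i, SCon (Ai i),
      let f := SHom.comp (SHom.piMap fun i => SHom.quotHom (Ai i) (φ i)) e
      Function.Injective f.toFun ∧
      (∀ i, Function.Surjective fun x => f.toFun x i) ∧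
      (∀ ψ : ∀ i, SCon ((Ai i).quot (φ i)),
        SCon.comap f (SCon.piCon ψ) = ⊥ → ∀ i, ψ i = ⊥) := by
  obtain ⟨φ, hφ⟩ := exists_maximal_comap_piCon_eq_bot e hinj
  refine ⟨φ, ?_, fun i => (quotHom_surjective (φ i)).comp (hsub i), fun ψ hψ i => ?_⟩
  · rw [← comap_bot_eq_bot_iff, comap_comp, ← piCon_bot, comap_piMap_piCon]
    simpa only [Pi.bot_apply, comap_quotHom_bot] using hφ.prop
  · -- `hψ` says that the pullbacks of the `ψ j` to the `Ai j` form an admissible tuple above `φ`.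
    have hle : φ ≤ fun j => comap (SHom.quotHom _ (φ j)) (ψ j) :=
      fun j => comap_quotHom_bot (φ j) ▸ comap_mono _ bot_le
    rw [comap_comp, comap_piMap_piCon] at hψ
    apply comap_injective_of_surjective (quotHom_surjective (φ i))
    rw [comap_quotHom_bot]
    exact (congrFun (hφ.eq_of_le hψ hle) i).symm
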